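/- APAL is strictly more expressive than epistemic logic (and than PAL) for at least two agents: for distinct agents a, b and atom p, there is no epistemic formula φ ∈ L_EL such that for every pointed epistemic model M_s, M_s ⊨ φ if and only if M_s ⊨ ◊(K_a p ∧ ¬K_b K_a p). -/

import Mathlib

/-! The diamond can be made true by announcing an atom that a given epistemic formula `φ` does
not mention. Take the four states `Bool × Bool`, where `b` observes the first coordinate and
every other agent the second, with `p` true exactly on the states `(false, _)`. Flipping the
second coordinate is an automorphism of this model, so every EL-definable announcement is
invariant under it. If after such an announcement `a` knows `p` at `(false, false)`, then
`(true, false)` and hence `(true, true)` have been removed, and so `b` knows that `a` knows `p`: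
the diamond fails. Adding a fresh atom `q`, false only at `(true, false)`, breaks the symmetry,
and announcing `q` makes the diamond true; `φ` cannot tell the two models apart. -/

/-- An epistemic (S5) model. -/
structure EpiModel (A P : Type) where
  S : Type
  ne : Nonempty S
  rel : A → S → S → Prop
  equiv : ∀ a, Equivalence (rel a)
  val : P → Set S

/-- The language L_EL of epistemic logic. -/
inductive ELForm (A P : Type) where
  | atom : P → ELForm A P
  | neg : ELForm A P → ELForm A P
  | and : ELForm A P → ELForm A P → ELForm A P
  | know : A → ELForm A P → ELForm A P

/-- Satisfaction of epistemic formulas, relativized to a current domain `D`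
(representing the submodel of `M` induced by `D`). -/
def ELForm.sat {A P : Type} (M : EpiModel A P) : ELForm A P → Set M.S → M.S → Prop
  | .atom p, _, s => s ∈ M.val p
  | .neg φ, D, s => ¬ ELForm.sat M φ D s
  | .and φ ψ, D, s => ELForm.sat M φ D s ∧ ELForm.sat M ψ D s
  | .know a φ, D, s => ∀ t, M.rel a s t → t ∈ D → ELForm.sat M φ D t

/-- The language L_APAL : atoms, ¬, ∧, K_a, announcements [ψ]φ and the
arbitrary-announcement quantifier □ (quantifying over L_EL). -/
inductive Form (A P : Type) where
  | atom : P → Form A P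
  | neg : Form A P → Form A P
  | and : Form A P → Form A P → Form A P
  | know : A → Form A P → Form A P
  | ann : Form A P → Form A P → Form A P
  | abox : Form A P → Form A P

/-- Satisfaction for L_APAL, relativized to a current domain `D`. -/
def Form.sat {A P : Type} (M : EpiModel A P) : Form A P → Set M.S → M.S → Prop
  | .atom p, _, s => s ∈ M.val p
  | .neg φ, D, s => ¬ Form.sat M φ D s
  | .and φ ψ, D, s => Form.sat M φ D s ∧ Form.sat M ψ D s
  | .know a φ, D, s => ∀ t, M.rel a s t → t ∈ D → Form.sat M φ D t
  | .ann ψ φ, D, s => Form.sat M ψ D s → Form.sat M φ {t | t ∈ D ∧ Form.sat M ψ D t} s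
  | .abox φ, D, s => ∀ χ : ELForm A P, ELForm.sat M χ D s →
      Form.sat M φ {t | t ∈ D ∧ ELForm.sat M χ D t} s

/-- Truth at a pointed model `M_s`. -/
def Sat {A P : Type} (M : EpiModel A P) (s : M.S) (φ : Form A P) : Prop :=
  Form.sat M φ Set.univ s

def Form.adia {A P : Type} (φ : Form A P) : Form A P := .neg (.abox (.neg φ))

/-- Truth of an epistemic formula at a pointed model. -/
def ELSat {A P : Type} (M : EpiModel A P) (s : M.S) (φ : ELForm A P) : Prop :=
  ELForm.sat M φ Set.univ s

namespace EpiModel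

variable {A P : Type}

abbrev withVal (M : EpiModel A P) (v : P → Set M.S) : EpiModel A P := { M with val := v }

open Classical in
abbrev square (b : A) (v : P → Set (Bool × Bool)) : EpiModel A P where
  S := Bool × Bool
  ne := inferInstance
  rel c x y := (if c = b then x.1 else x.2) = (if c = b then y.1 else y.2)
  equiv _ := ⟨fun _ => rfl, Eq.symm, Eq.trans⟩
  val := v

variable {b : A} {v : P → Set (Bool × Bool)}

def flipSnd : Equiv.Perm (Bool × Bool) := (Equiv.refl Bool).prodCongr Equiv.boolNot

theorem square_rel_flipSnd (c : A) (x y : Bool × Bool) :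
    (square b v).rel c (flipSnd x) (flipSnd y) ↔ (square b v).rel c x y := by
  by_cases hc : c = b <;> simp [flipSnd, hc]

end EpiModel

namespace ELForm

variable {A P : Type}

def atoms : ELForm A P → List P
  | .atom r => [r]
  | .neg φ => φ.atoms
  | .and φ ψ => φ.atoms ++ ψ.atoms
  | .know _ φ => φ.atoms

theorem sat_withVal_iff (M : EpiModel A P) {v : P → Set M.S} (χ : ELForm A P)
    (h : ∀ r ∈ χ.atoms, v r = M.val r) (D : Set M.S) (s : M.S) :
    ELForm.sat (M.withVal v) χ D s ↔ ELForm.sat M χ D s := by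
  induction χ generalizing s with
  | atom r => simp [ELForm.sat, h r (by simp [atoms])]
  | neg φ ih => exact not_congr (ih h s)
  | and φ ψ ihφ ihψ =>
    simp only [atoms, List.mem_append] at h
    exact and_congr (ihφ (fun r hr => h r (.inl hr)) s) (ihψ (fun r hr => h r (.inr hr)) s)
  | know c φ ih =>
    exact forall_congr' fun t => imp_congr_right fun _ => imp_congr_right fun _ => ih h t

theorem sat_perm_iff (M : EpiModel A P) (e : Equiv.Perm M.S)
    (hrel : ∀ c x y, M.rel c (e x) (e y) ↔ M.rel c x y)
    (hval : ∀ r x, e x ∈ M.val r ↔ x ∈ M.val r) (χ : ELForm A P) {D : Set M.S}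
    (hD : ∀ x, e x ∈ D ↔ x ∈ D) (s : M.S) :
    ELForm.sat M χ D (e s) ↔ ELForm.sat M χ D s := by
  induction χ generalizing s with
  | atom r => exact hval r s
  | neg φ ih => exact not_congr (ih s)
  | and φ ψ ihφ ihψ => exact and_congr (ihφ s) (ihψ s)
  | know c φ ih =>
    refine (e.forall_congr fun {t} => ?_).symm
    rw [hrel, hD, ih]

end ELForm

theorem Form.sat_adia_iff {A P : Type} (M : EpiModel A P) (θ : Form A P) (D : Set M.S) (s : M.S) :
    Form.sat M θ.adia D s ↔
      ∃ χ : ELForm A P, ELForm.sat M χ D s ∧ Form.sat M θ {t | t ∈ D ∧ ELForm.sat M χ D t} s := by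
  simp [Form.adia, Form.sat]

section Square

variable {A P : Type} (a b : A) (p q : P)

open EpiModel

def pVal : P → Set (Bool × Bool) := fun r => {x | r = p ∧ x.1 = false}

def pqVal : P → Set (Bool × Bool) := fun r => pVal p r ∪ {x | r = q ∧ x ≠ (true, false)}

abbrev squareP : EpiModel A P := square b (pVal p)

abbrev squarePQ : EpiModel A P := (squareP b p).withVal (pqVal p q)

abbrev secretKnowledge : Form A P := .and (.know a (.atom p)) (.neg (.know b (.know a (.atom p))))

theorem pqVal_of_ne {r : P} (hr : r ≠ q) : pqVal p q r = pVal p r := by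
  simp [pqVal, hr]

theorem sat_adia_squarePQ (hab : a ≠ b) (hqp : q ≠ p) :
    Sat (squarePQ b p q) (false, false) (secretKnowledge a b p).adia := by
  refine (Form.sat_adia_iff _ _ _ _).mpr ⟨.atom q, ?_, ?_⟩
  · simp [ELForm.sat, pqVal]
  · simp [Form.sat, ELForm.sat, pVal, pqVal, hab, hqp.symm]

theorem squareP_know_know_of_know (hab : a ≠ b) {D : Set (Bool × Bool)}
    (hD : ∀ x, flipSnd x ∈ D ↔ x ∈ D)
    (h : Form.sat (squareP b p) (.know a (.atom p)) D (false, false)) :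
    Form.sat (squareP b p) (.know b (.know a (.atom p))) D (false, false) := by
  have h10 : (true, false) ∉ D := fun h10 => by
    simpa [Form.sat, pVal] using h (true, false) (by simp [hab]) h10
  have h11 : (true, true) ∉ D := fun h11 => h10 ((hD (true, true)).mpr h11)
  rintro t - - ⟨_ | _, _ | _⟩ - _ <;> simp_all [Form.sat, pVal]

theorem not_sat_adia_squareP (hab : a ≠ b) :
    ¬ Sat (squareP b p) (false, false) (secretKnowledge a b p).adia := by
  intro h
  obtain ⟨χ, -, hKa, hKbKa⟩ := (Form.sat_adia_iff _ _ _ _).mp h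
  have hflip : ∀ x, ELForm.sat (squareP b p) χ Set.univ (flipSnd x) ↔
      ELForm.sat (squareP b p) χ Set.univ x :=
    ELForm.sat_perm_iff (squareP b p) flipSnd square_rel_flipSnd (fun _ _ => Iff.rfl) χ
      (fun _ => Iff.rfl)
  exact hKbKa (squareP_know_know_of_know a b p hab (fun x => and_congr Iff.rfl (hflip x)) hKa)

end Square

theorem apal_more_expressive_than_el_general
    (A P : Type) [Infinite P]
    (a b : A) (hab : a ≠ b) (p : P) :
    ¬ ∃ φ : ELForm A P, ∀ (M : EpiModel A P) (s : M.S),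
        ELSat M s φ ↔
          Sat M s (Form.adia (.and (.know a (.atom p))
            (.neg (.know b (.know a (.atom p)))))) := by
  rintro ⟨φ, hφ⟩
  classical
  obtain ⟨q, hq⟩ := Infinite.exists_notMem_finset (p :: φ.atoms).toFinset
  obtain ⟨hqp, hqφ⟩ : q ≠ p ∧ q ∉ φ.atoms := by simpa using hq
  have hφ_blind : ELSat (squarePQ b p q) (false, false) φ ↔ ELSat (squareP b p) (false, false) φ :=
    ELForm.sat_withVal_iff _ φ (fun r hr => pqVal_of_ne p q (ne_of_mem_of_not_mem hr hqφ)) _ _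
  exact not_sat_adia_squareP a b p hab <|
    (hφ _ _).mp (hφ_blind.mp ((hφ _ _).mpr (sat_adia_squarePQ a b p q hab hqp)))

/-- APAL is strictly more expressive than epistemic logic
(hence than PAL) for at least two agents: no epistemic formula is equivalent,
on all pointed epistemic models, to `◊(K_a p ∧ ¬K_b K_a p)`. -/
theorem apal_more_expressive_than_el
    (A P : Type) [Countable A] [Countable P] [Infinite P]
    (a b : A) (hab : a ≠ b) (p : P) :
    ¬ ∃ φ : ELForm A P, ∀ (M : EpiModel A P) (s : M.S),
        ELSat M s φ ↔
          Sat M s (Form.adia (.and (.know a (.atom p))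
            (.neg (.know b (.know a (.atom p)))))) :=
  apal_more_expressive_than_el_general A P a b hab p
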